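/- arXiv:1904.12135 — 3 statements merged into one kernel-verified Lean document; each statement's English description precedes it below -/
import Mathlib

section
/- Every positive integer n has a unique representation n = ∑_{i=1}^{k} a_i f_i with a_i ∈ {0,1}, a_k = 1, and no two consecutive a_i equal to 1 (i.e., a_i = 1 implies a_{i+1} = 0), where f is the Fibonacci sequence with f_0 = f_1 = 1 (Zeckendorf representation using f_1 = 1, f_2 = 2, f_3 = 3, f_4 = 5, …). -/
/-!
Since `f i = fib (i + 1)`, shifting every index by one and listing the result in decreasing order
turns the admissible sets `S` into exactly the lists that Mathlib calls Zeckendorf representations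
(decreasing, gaps at least two, entries at least two), without changing the sum of the Fibonacci
numbers. Zeckendorf's theorem for lists, `Nat.zeckendorf`, then gives existence and uniqueness.
-/

open Finset Nat

theorem eq_fib_add_one_of_fib_rec {f : ℕ → ℕ} (hf0 : f 0 = 1) (hf1 : f 1 = 1)
    (hf : ∀ n, f (n + 2) = f (n + 1) + f n) : ∀ n, f n = fib (n + 1)
  | 0 => hf0
  | 1 => hf1
  | n + 2 => by
    rw [hf, eq_fib_add_one_of_fib_rec hf0 hf1 hf (n + 1), eq_fib_add_one_of_fib_rec hf0 hf1 hf n,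
      add_comm]
    exact (fib_add_two (n := n + 1)).symm

namespace List

local instance : IsTrans ℕ fun a b ↦ b + 2 ≤ a where
  trans _ _ _ hab hbc := by omega

theorem isZeckendorfRep_iff {l : List ℕ} :
    l.IsZeckendorfRep ↔ (∀ a ∈ l, 2 ≤ a) ∧ l.Pairwise (fun a b ↦ b + 2 ≤ a) := by
  rw [IsZeckendorfRep, isChain_iff_pairwise, pairwise_append]
  simp [and_comm]

end List

theorem Finset.pairwise_sort_add_two_le_iff (s : Finset ℕ) :
    (s.sort (· ≥ ·)).Pairwise (fun a b ↦ b + 2 ≤ a) ↔ ∀ i ∈ s, i + 1 ∉ s := by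
  constructor
  · intro h i hi hi'
    -- a symmetric weakening of the gap condition, so that the order of `i + 1` and `i` is irrelevant
    have : Std.Symm fun a b : ℕ ↦ a ≠ b + 1 ∧ b ≠ a + 1 := ⟨fun _ _ ↦ And.symm⟩
    have hne := (h.imp (S := fun a b : ℕ ↦ a ≠ b + 1 ∧ b ≠ a + 1) (by omega)).forall
      ((mem_sort _).2 hi') ((mem_sort _).2 hi) (by omega)
    exact hne.1 rfl
  · intro h
    refine (List.sortedGT_iff_pairwise.1 s.sortedGT_sort).imp_of_mem fun {a b} ha hb hab ↦ ?_
    have : a ≠ b + 1 := fun e ↦ h b ((mem_sort _).1 hb) (e ▸ (mem_sort _).1 ha)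
    omega

def fibIndices (s : Finset ℕ) : List ℕ := (s.sort (· ≥ ·)).map (· + 1)

theorem fibIndices_injective : Function.Injective fibIndices := fun s t h ↦ by
  simpa using congrArg List.toFinset (List.map_injective_iff.2 (add_left_injective 1) h)

theorem sum_map_fib_fibIndices (s : Finset ℕ) :
    ((fibIndices s).map fib).sum = ∑ i ∈ s, fib (i + 1) := by
  rw [fibIndices, List.map_map, Finset.sum_eq_multiset_sum, ← Finset.sort_eq s (· ≥ ·),
    Multiset.map_coe, Multiset.sum_coe]
  rfl

theorem isZeckendorfRep_fibIndices_iff (s : Finset ℕ) :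
    (fibIndices s).IsZeckendorfRep ↔ (∀ i ∈ s, 1 ≤ i) ∧ ∀ i ∈ s, i + 1 ∉ s := by
  rw [List.isZeckendorfRep_iff, fibIndices, List.pairwise_map, ← pairwise_sort_add_two_le_iff]
  simp

theorem fibIndices_toFinset_map_sub_one {l : List ℕ} (hl : l.IsZeckendorfRep) :
    fibIndices (l.map (· - 1)).toFinset = l := by
  obtain ⟨hl2, hpair⟩ := List.isZeckendorfRep_iff.1 hl
  have hgt : (l.map (· - 1)).Pairwise (· > ·) :=
    List.pairwise_map.2 <| hpair.imp_of_mem fun ha hb hab ↦ by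
      have := hl2 _ ha; have := hl2 _ hb; omega
  rw [fibIndices, (List.toFinset_sort _ hgt.nodup).2 (hgt.imp le_of_lt), List.map_map]
  exact (List.map_congr_left fun a ha ↦ Nat.sub_add_cancel (one_le_two.trans (hl2 a ha))).trans
    l.map_id

theorem zeckendorf_unique
    (f : ℕ → ℕ)
    (hf0 : f 0 = 1) (hf1 : f 1 = 1)
    (hf : ∀ n, f (n+2) = f (n+1) + f n) :
    ∀ n : ℕ, 0 < n →
      ∃! S : Finset ℕ, (∀ i ∈ S, 1 ≤ i) ∧ (∀ i ∈ S, i + 1 ∉ S) ∧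
        n = ∑ i ∈ S, f i := by
  intro n _
  simp only [eq_fib_add_one_of_fib_rec hf0 hf1 hf, ← sum_map_fib_fibIndices, ← and_assoc,
    ← isZeckendorfRep_fibIndices_iff]
  have hS := fibIndices_toFinset_map_sub_one (isZeckendorfRep_zeckendorf n)
  refine ⟨((zeckendorf n).map (· - 1)).toFinset, ⟨?_, ?_⟩, fun t ⟨ht, hsum⟩ ↦ ?_⟩
  · rw [hS]; exact isZeckendorfRep_zeckendorf n
  · rw [hS, sum_zeckendorf_fib]
  · apply fibIndices_injective
    rw [hS, hsum, zeckendorf_sum_fib ht]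
end

section
/- Every positive integer n can be written as n = ∑_{j=1}^{k} a_j w_j with digits a_j ∈ {0,1,2}, where w is defined by w_1 = 1, w_2 = 3, w_{n+2} = 3 w_{n+1} − w_n (the golden sequence of the white Fibonacci tree: 1, 3, 8, 21, 55, …). -/
/-!
If each weight satisfies `w (k+1) ≤ 2 (w 1 + ⋯ + w k) + 1`, the translates
`c • w (k+1) + [0, 2 (w 1 + ⋯ + w k)]`, `c = 0, 1, 2`, cover `[0, 2 (w 1 + ⋯ + w (k+1))]`
without gaps, so induction on `k` represents every `n ≤ 2 (w 1 + ⋯ + w k)` with digits in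
`{0, 1, 2}`. For the golden sequence this gap condition follows from
`w (k+2) = 3 w (k+1) - w k`, and `n ≤ w 1 + ⋯ + w n` because the sequence is positive.
-/

open Finset

theorem exists_le_mul_add_of_le_mul_add {w m c n : ℕ} (hw : w ≤ m + 1) (hn : n ≤ c * w + m) :
    ∃ c' ≤ c, ∃ r ≤ m, n = c' * w + r := by
  induction c with
  | zero => exact ⟨0, le_rfl, n, by simpa using hn, by simp⟩
  | succ c ih =>
    by_cases hlow : n ≤ c * w + m
    · obtain ⟨c', hc', r, hr, rfl⟩ := ih hlow
      exact ⟨c', hc'.trans c.le_succ, r, hr, rfl⟩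
    · refine ⟨c + 1, le_rfl, n - (c + 1) * w, ?_, ?_⟩ <;> grind

theorem exists_digits_of_le_mul_sum {d : ℕ} (w : ℕ → ℕ)
    (hgap : ∀ k, w (k + 1) ≤ d * ∑ j ∈ Icc 1 k, w j + 1) (k n : ℕ)
    (hn : n ≤ d * ∑ j ∈ Icc 1 k, w j) :
    ∃ a : ℕ → ℕ, (∀ j, a j ≤ d) ∧ n = ∑ j ∈ Icc 1 k, a j * w j := by
  induction k generalizing n with
  | zero => exact ⟨0, fun _ => Nat.zero_le _, by simpa using hn⟩
  | succ k ih =>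
    rw [sum_Icc_succ_top (by omega : 1 ≤ k + 1), mul_add, add_comm] at hn
    obtain ⟨c, hc, r, hr, rfl⟩ := exists_le_mul_add_of_le_mul_add (hgap k) hn
    obtain ⟨a, had, rfl⟩ := ih r hr
    refine ⟨Function.update a (k + 1) c, fun j => ?_, ?_⟩
    · rcases eq_or_ne j (k + 1) with rfl | hj
      · simpa using hc
      · simpa [hj] using had j
    · have hlow : ∀ j ∈ Icc 1 k, Function.update a (k + 1) c j * w j = a j * w j := by
        intro j hj
        rw [Function.update_of_ne (by grind)]
      rw [sum_Icc_succ_top (by omega : 1 ≤ k + 1), sum_congr rfl hlow, Function.update_self,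
        add_comm]

section GoldenRecurrence

variable {w : ℕ → ℕ} (hw : ∀ n, w (n + 2) + w n = 3 * w (n + 1))
include hw

theorem succ_le_two_mul_sum_Icc_add_one (hw1 : w 1 ≤ 1) (k : ℕ) :
    w (k + 1) ≤ 2 * ∑ j ∈ Icc 1 k, w j + 1 := by
  induction k with
  | zero => simpa using hw1
  | succ k ih =>
    have hrec : w (k + 2) + w k = 3 * w (k + 1) := hw k
    rw [sum_Icc_succ_top (by omega : 1 ≤ k + 1)]
    show w (k + 2) ≤ _
    omega

theorem monotone_succ_of_le (hw12 : w 1 ≤ w 2) : Monotone fun n => w (n + 1) := by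
  have hstep : ∀ n, w (n + 1) ≤ w (n + 2) := by
    intro n
    induction n with
    | zero => exact hw12
    | succ n ih =>
      have hrec : w (n + 3) + w (n + 1) = 3 * w (n + 2) := hw (n + 1)
      show w (n + 2) ≤ w (n + 3)
      omega
  exact monotone_nat_of_le_succ hstep

end GoldenRecurrence

theorem golden_representation_exists
    (w : ℕ → ℕ)
    (hw1 : w 1 = 1) (hw2 : w 2 = 3)
    (hw : ∀ n, w (n+2) + w n = 3 * w (n+1)) :
    ∀ n : ℕ, 1 ≤ n → ∃ k : ℕ, 1 ≤ k ∧ ∃ a : ℕ → ℕ,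
      (∀ j, a j ≤ 2) ∧ n = ∑ j ∈ Finset.Icc 1 k, a j * w j := by
  intro n hn
  have hpos : ∀ j ∈ Icc 1 n, 1 ≤ w j := by
    intro j hj
    obtain ⟨i, rfl⟩ : ∃ i, j = i + 1 := ⟨j - 1, by grind⟩
    calc 1 = w 1 := hw1.symm
      _ ≤ w (i + 1) := monotone_succ_of_le hw (by omega) (Nat.zero_le i)
  have hsum : n ≤ 2 * ∑ j ∈ Icc 1 n, w j :=
    calc n = ∑ _j ∈ Icc 1 n, 1 := by simp
      _ ≤ ∑ j ∈ Icc 1 n, w j := sum_le_sum hpos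
      _ ≤ 2 * ∑ j ∈ Icc 1 n, w j := by omega
  exact ⟨n, hn, exists_digits_of_le_mul_sum w
    (succ_le_two_mul_sum_Icc_add_one hw hw1.le) n n hsum⟩
end

section
/- Every positive integer has a unique representation n = ∑_{j=1}^{k} a_j w_j with digits a_j ∈ {0,1,2} avoiding the forbidden pattern 2 1* 2 (i.e., there are no indices p < q with a_p = 2, a_q = 2, and a_r = 1 for all p < r < q), where w_1 = 1, w_2 = 3, w_{n+2} = 3 w_{n+1} − w_n. -/
/-!
Digits `≤ 2` on positions `1, …, k` avoiding the pattern `2 1* 2` have value `< w (k + 1)`, and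
even `< w (k + 1) - w k` unless they end in `2 1*`. Hence in a code the top digit `d` at
position `k + 1` and the lower value `m` are the quotient and remainder of `n` by `w (k + 1)`,
which gives uniqueness. For existence take this `d` and a code of `m`: since
`w (k + 2) = 3 w (k + 1) - w k`, the digit `d = 2` only occurs when `m < w (k + 1) - w k`, and then
the code of `m` can be chosen not to end in `2 1*`.
-/

open Finset

theorem Nat.eq_and_eq_of_add_mul_eq_add_mul {m r s x y : ℕ} (hr : r < m) (hs : s < m)
    (h : r + x * m = s + y * m) : r = s ∧ x = y := by
  have hm : 0 < m := by omega
  have hdiv := congrArg (· / m) h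
  have hmod := congrArg (· % m) h
  simp only [Nat.add_mul_div_right _ _ hm, Nat.div_eq_of_lt hr, Nat.div_eq_of_lt hs,
    Nat.add_mul_mod_self_right, Nat.mod_eq_of_lt hr, Nat.mod_eq_of_lt hs] at hdiv hmod
  omega

namespace GoldenCode

/-- Position `0` is included; it contributes nothing once `w 0 = 0`. -/
def partialValue (w a : ℕ → ℕ) (k : ℕ) : ℕ := ∑ j ∈ range (k + 1), a j * w j

def Admissible (a : ℕ → ℕ) : Prop :=
  ¬ ∃ p q : ℕ, p < q ∧ a p = 2 ∧ a q = 2 ∧ (∀ r, p < r → r < q → a r = 1)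

/-- The digits up to position `k` end in `2 1*`, so a digit 2 at position `k + 1` would
complete a forbidden pattern. -/
def Pending (a : ℕ → ℕ) (k : ℕ) : Prop :=
  ∃ p ≤ k, a p = 2 ∧ ∀ r, p < r → r ≤ k → a r = 1

structure IsGoldenCode (w : ℕ → ℕ) (k : ℕ) (a : ℕ → ℕ) (n : ℕ) : Prop where
  zero : a 0 = 0
  le_two : ∀ j, a j ≤ 2
  eq_zero_of_lt : ∀ j, k < j → a j = 0
  admissible : Admissible a
  partialValue_eq : partialValue w a k = n

variable {w a b : ℕ → ℕ} {k l n d : ℕ}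

theorem partialValue_succ (w a : ℕ → ℕ) (k : ℕ) :
    partialValue w a (k + 1) = partialValue w a k + a (k + 1) * w (k + 1) :=
  sum_range_succ _ _

theorem partialValue_congr (h : ∀ j ≤ k, a j = b j) : partialValue w a k = partialValue w b k :=
  sum_congr rfl fun j hj => by rw [h j (Nat.lt_succ_iff.1 (mem_range.1 hj))]

theorem partialValue_eq_of_le (hkl : k ≤ l) (ha : ∀ j, k < j → a j = 0) :
    partialValue w a l = partialValue w a k :=
  (sum_subset (range_subset_range.2 (by omega)) fun j _ hj => by
    rw [ha j (by simpa using hj), zero_mul]).symm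

theorem _root_.Finsupp.sum_eq_partialValue (w : ℕ → ℕ) (A : ℕ →₀ ℕ) (hA : ∀ j, k < j → A j = 0) :
    A.sum (fun j d => d * w j) = partialValue w A k :=
  A.sum_of_support_subset (fun j hj => mem_range.2 <| Nat.lt_succ_of_le <| not_lt.1 fun hkj =>
    Finsupp.mem_support_iff.1 hj (hA j hkj)) _ fun _ _ => zero_mul _

theorem pending_congr (h : ∀ j ≤ k, a j = b j) : Pending a k ↔ Pending b k := by
  refine exists_congr fun p => and_congr_right fun hp => ?_
  rw [h p hp]
  exact and_congr_right' <| forall_congr' fun r => imp_congr_right fun _ =>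
    forall_congr' fun hr => by rw [h r hr]

theorem pending_succ_iff : Pending a (k + 1) ↔ a (k + 1) = 2 ∨ a (k + 1) = 1 ∧ Pending a k := by
  constructor
  · rintro ⟨p, hp, hp2, hones⟩
    rcases hp.eq_or_lt with rfl | hlt
    · exact Or.inl hp2
    · exact Or.inr ⟨hones _ hlt le_rfl, p, by omega, hp2, fun r h₁ h₂ => hones r h₁ (by omega)⟩
  · rintro (h2 | ⟨h1, p, hp, hp2, hones⟩)
    · exact ⟨k + 1, le_rfl, h2, fun r h₁ h₂ => by omega⟩
    · refine ⟨p, by omega, hp2, fun r hpr hr => ?_⟩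
      rcases hr.eq_or_lt with rfl | hr
      exacts [h1, hones r hpr (by omega)]

theorem pending_update_succ_iff :
    Pending (Function.update a (k + 1) d) (k + 1) ↔ d = 2 ∨ d = 1 ∧ Pending a k := by
  rw [pending_succ_iff, Function.update_self,
    pending_congr fun j hj => Function.update_of_ne (by omega) _ _]

theorem Admissible.not_pending (ha : Admissible a) (h2 : a (k + 1) = 2) : ¬ Pending a k :=
  fun ⟨p, hp, hp2, hones⟩ => ha ⟨p, k + 1, by omega, hp2, h2, fun r h₁ h₂ => hones r h₁ (by omega)⟩

theorem Admissible.update (ha : Admissible a) (hk : ∀ j, k < j → a j = 0)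
    (hd : d = 2 → ¬ Pending a k) : Admissible (Function.update a (k + 1) d) := by
  rintro ⟨p, q, hpq, hp, hq, hones⟩
  have hold : ∀ j < k + 1, Function.update a (k + 1) d j = a j :=
    fun j hj => Function.update_of_ne hj.ne _ _
  rcases lt_trichotomy q (k + 1) with hqk | rfl | hqk
  · refine ha ⟨p, q, hpq, hold p (by omega) ▸ hp, hold q hqk ▸ hq, fun r h₁ h₂ => ?_⟩
    exact hold r (by omega) ▸ hones r h₁ h₂
  · refine hd (by simpa using hq) ⟨p, by omega, hold p hpq ▸ hp, fun r h₁ h₂ => ?_⟩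
    exact hold r (by omega) ▸ hones r h₁ (by omega)
  · rw [Function.update_of_ne hqk.ne', hk q (by omega)] at hq
    exact absurd hq (by norm_num)

theorem IsGoldenCode.mono (ha : IsGoldenCode w k a n) (hkl : k ≤ l) : IsGoldenCode w l a n where
  zero := ha.zero
  le_two := ha.le_two
  eq_zero_of_lt j hj := ha.eq_zero_of_lt j (by omega)
  admissible := ha.admissible
  partialValue_eq := by rw [partialValue_eq_of_le hkl ha.eq_zero_of_lt, ha.partialValue_eq]

theorem IsGoldenCode.update (ha : IsGoldenCode w k a n) (hd : d ≤ 2)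
    (hd2 : d = 2 → ¬ Pending a k) :
    IsGoldenCode w (k + 1) (Function.update a (k + 1) d) (n + d * w (k + 1)) where
  zero := by rw [Function.update_of_ne (by omega)]; exact ha.zero
  le_two j := by
    rcases eq_or_ne j (k + 1) with rfl | hj
    · rwa [Function.update_self]
    · rw [Function.update_of_ne hj]; exact ha.le_two j
  eq_zero_of_lt j hj := by
    rw [Function.update_of_ne (by omega)]; exact ha.eq_zero_of_lt j (by omega)
  admissible := ha.admissible.update ha.eq_zero_of_lt hd2
  partialValue_eq := by
    rw [partialValue_succ, Function.update_self, ← ha.partialValue_eq,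
      partialValue_congr fun j hj => Function.update_of_ne (by omega) _ _]

theorem IsGoldenCode.exists_finsupp (ha : IsGoldenCode w k a n) : ∃ A : ℕ →₀ ℕ, ⇑A = a :=
  ⟨Finsupp.ofSupportFinite a <| (Set.finite_Iic k).subset fun j hj =>
    not_lt.1 fun hkj => hj (ha.eq_zero_of_lt j hkj), rfl⟩

theorem IsGoldenCode.finsupp_sum {A : ℕ →₀ ℕ} (hA : IsGoldenCode w k A n) :
    A.sum (fun j d => d * w j) = n :=
  (A.sum_eq_partialValue w hA.eq_zero_of_lt).trans hA.partialValue_eq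

section Weights

variable (hw0 : w 0 = 0) (hw1 : w 1 = 1) (hw : ∀ n, w (n + 2) + w n = 3 * w (n + 1))
include hw0 hw1 hw

theorem monotone_of_recurrence : Monotone w :=
  monotone_nat_of_le_succ fun k => by
    induction k with
    | zero => simp [hw0, hw1]
    | succ k ih =>
      have : w (k + 1 + 1) + w k = 3 * w (k + 1) := hw k
      omega

theorem lt_apply_succ (n : ℕ) : n < w (n + 1) := by
  induction n with
  | zero => simp [hw1]
  | succ n ih =>
    have : w (n + 1 + 1) + w n = 3 * w (n + 1) := hw n
    have := monotone_of_recurrence hw0 hw1 hw (Nat.le_add_right n 1)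
    omega

theorem partialValue_lt (ha2 : ∀ j, a j ≤ 2) (ha : Admissible a) (k : ℕ) :
    partialValue w a k < w (k + 1) ∧
      (¬ Pending a k → partialValue w a k + w k < w (k + 1)) := by
  induction k with
  | zero => simp [partialValue, hw0, hw1]
  | succ k ih =>
    have : w (k + 1 + 1) + w k = 3 * w (k + 1) := hw k
    have := monotone_of_recurrence hw0 hw1 hw (Nat.le_add_right k 1)
    rw [partialValue_succ, pending_succ_iff]
    obtain h | h | h : a (k + 1) = 0 ∨ a (k + 1) = 1 ∨ a (k + 1) = 2 := by
      have := ha2 (k + 1); omega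
    · rw [h]; exact ⟨by omega, fun _ => by omega⟩
    · rw [h]
      refine ⟨by omega, fun hp => ?_⟩
      have := ih.2 fun hp' => hp (Or.inr ⟨rfl, hp'⟩)
      omega
    · have := ih.2 (ha.not_pending h)
      rw [h]
      exact ⟨by omega, fun hp => absurd (Or.inl rfl) hp⟩

theorem eq_of_partialValue_eq (ha2 : ∀ j, a j ≤ 2) (ha : Admissible a) (hb2 : ∀ j, b j ≤ 2)
    (hb : Admissible b) (h0 : a 0 = b 0) :
    ∀ k, partialValue w a k = partialValue w b k → ∀ j ≤ k, a j = b j := by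
  intro k
  induction k with
  | zero => intro _ j hj; rwa [Nat.le_zero.1 hj]
  | succ k ih =>
    intro h j hj
    rw [partialValue_succ, partialValue_succ] at h
    obtain ⟨hlow, htop⟩ := Nat.eq_and_eq_of_add_mul_eq_add_mul
      (partialValue_lt hw0 hw1 hw ha2 ha k).1 (partialValue_lt hw0 hw1 hw hb2 hb k).1 h
    rcases Nat.le_succ_iff.1 hj with hj | rfl
    exacts [ih hlow j hj, htop]

theorem IsGoldenCode.unique (ha : IsGoldenCode w k a n) (hb : IsGoldenCode w l b n) : a = b := by
  have ha' := ha.mono (le_max_left k l)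
  have hb' := hb.mono (le_max_right k l)
  funext j
  rcases le_or_gt j (max k l) with hj | hj
  · exact eq_of_partialValue_eq hw0 hw1 hw ha.le_two ha.admissible hb.le_two hb.admissible
      (ha.zero.trans hb.zero.symm) _ (ha'.partialValue_eq.trans hb'.partialValue_eq.symm) j hj
  · rw [ha'.eq_zero_of_lt j hj, hb'.eq_zero_of_lt j hj]

theorem exists_isGoldenCode (k : ℕ) :
    ∀ n < w (k + 1), ∃ a, IsGoldenCode w k a n ∧ (n + w k < w (k + 1) → ¬ Pending a k) := by
  induction k with
  | zero =>
    intro n hn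
    rw [zero_add, hw1] at hn
    refine ⟨0, ⟨rfl, fun _ => by simp, fun _ _ => rfl, ?_, ?_⟩, ?_⟩
    · rintro ⟨p, -, -, hp, -⟩; simp at hp
    · simp only [partialValue, zero_add, range_one, sum_singleton, hw0, mul_zero]; omega
    · rintro - ⟨p, -, hp, -⟩; simp at hp
  | succ k ih =>
    intro n hn
    have : w (k + 1 + 1) + w k = 3 * w (k + 1) := hw k
    have := monotone_of_recurrence hw0 hw1 hw (Nat.le_add_right k 1)
    have hpos : 0 < w (k + 1) := by have := lt_apply_succ hw0 hw1 hw k; omega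
    obtain ⟨m, d, hm, hd, rfl⟩ : ∃ m d, m < w (k + 1) ∧ d ≤ 2 ∧ n = m + d * w (k + 1) :=
      ⟨n % w (k + 1), n / w (k + 1), Nat.mod_lt _ hpos,
        Nat.lt_succ_iff.1 ((Nat.div_lt_iff_lt_mul hpos).2 (by omega)),
        (Nat.mod_add_div' n _).symm⟩
    obtain ⟨a, ha, hfree⟩ := ih m hm
    refine ⟨_, ha.update hd ?_, fun hlt => ?_⟩
    · rintro rfl
      exact hfree (by omega)
    · rw [pending_update_succ_iff]
      rintro (rfl | ⟨rfl, hp⟩)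
      · omega
      · exact hfree (by omega) hp

end Weights

end GoldenCode

open GoldenCode in
theorem golden_code_unique
    (w : ℕ → ℕ)
    (hw1 : w 1 = 1) (hw2 : w 2 = 3)
    (hw : ∀ n, w (n+2) + w n = 3 * w (n+1)) :
    ∀ n : ℕ, 1 ≤ n →
      ∃! a : ℕ →₀ ℕ,
        a 0 = 0 ∧ (∀ j, a j ≤ 2) ∧
        n = a.sum (fun j d => d * w j) ∧
        ¬ ∃ p q : ℕ, p < q ∧ a p = 2 ∧ a q = 2 ∧
            (∀ r, p < r → r < q → a r = 1) := by
  intro n _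
  have hw0 : w 0 = 0 := by have : w 2 + w 0 = 3 * w 1 := hw 0; omega
  obtain ⟨a, ha, -⟩ := exists_isGoldenCode hw0 hw1 hw n n (lt_apply_succ hw0 hw1 hw n)
  obtain ⟨A, rfl⟩ := ha.exists_finsupp
  refine ⟨A, ⟨ha.zero, ha.le_two, ha.finsupp_sum.symm, ha.admissible⟩, ?_⟩
  rintro B ⟨hB0, hB2, hBn, hB⟩
  obtain ⟨K, hK⟩ := B.support.exists_nat_subset_range
  have hBK : ∀ j, K < j → B j = 0 := fun j hj =>
    Finsupp.notMem_support_iff.1 fun hmem => by have := mem_range.1 (hK hmem); omega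
  have hBcode : IsGoldenCode w K B n :=
    ⟨hB0, hB2, hBK, hB, (B.sum_eq_partialValue w hBK).symm.trans hBn.symm⟩
  exact DFunLike.coe_injective (hBcode.unique hw0 hw1 hw ha)
end
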